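/- Let Φ be a Leonard system acting on V with parameter array ({θ_i}; {θ*_i}; {φ_i}; {ϕ_i}) and nonzero ξ*_0 ∈ E*_0V, ξ_0 ∈ E_0V with bilinear form ⟨·,·⟩. Then for 0 ≤ r, i ≤ d: (1/tr(E_0E*_0)) · (E*_0 E_0 τ*_r(A*)/(φ_1⋯φ_r)) · τ_i(A) E*_0 = δ_{ri} E*_0. Consequently (⟨ξ_0,ξ_0⟩/⟨ξ_0,ξ*_0⟩) ∑_{r=0}^d X_r E_0 τ*_r(A*)/(φ_1⋯φ_r) maps τ_i(A)ξ*_0 to X_iξ_0, where X_0,…,X_d is any of the families {E*_i}, {E*_{d−i}}, {τ*_i(A*)}, {τ*_{d−i}(A*)}, {η*_i(A*)}, {η*_{d−i}(A*)}. -/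

import Mathlib

/-!
Write `u_i = τ_i(A) ξ*_0`. Since `A` maps `E*_k V` into `E*_{k-1} V + E*_k V + E*_{k+1} V`, the
vector `u_i` lies in `E*_0 V + ⋯ + E*_i V` with nonzero `E*_i`-component, so the `u_i` form a
basis; since `τ_i(A)` kills `E_0 V, …, E_{i-1} V`, also `u_i ∈ E_i V + ⋯ + E_d V`. These two
triangularities force `(A* - θ*_j) u_j = c_j u_{j-1}` with `c_j ≠ 0`, and applying the rank-one
idempotent `E*_0` gives `(θ*_0 - θ*_j) tr(τ_j(A) E*_0) = c_j tr(τ_{j-1}(A) E*_0)`, that is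
`c_j = φ_j`. Hence `E_0 τ*_r(A*) u_i = δ_{ri} φ_1⋯φ_r E_0 ξ*_0`: for `r > i` already
`τ*_r(A*) u_i = 0`, and for `r ≤ i` the operator `τ*_r(A*)` lowers `u_i` to `φ_i⋯φ_{i-r+1} u_{i-r}`
modulo `E_{i-r+1} V + ⋯ + E_d V`, which `E_0` kills. Both claims follow, because `E*_0` and `E_0`
have rank one and `E_0` is self-adjoint for `⟨·,·⟩` (distinct eigenspaces of the self-adjoint `A`
are orthogonal).
-/

open Matrix Polynomial

/-- A Leonard system in the matrix algebra `Mat_{d+1}(K)`: multiplicity-free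
elements `A`, `Astar` with orderings `E`, `Estar` of their primitive idempotents
satisfying the irreducible-tridiagonality conditions. -/
structure LeonardSystem (K : Type*) [Field K] (d : ℕ) where
  A : Matrix (Fin (d+1)) (Fin (d+1)) K
  Astar : Matrix (Fin (d+1)) (Fin (d+1)) K
  E : Fin (d+1) → Matrix (Fin (d+1)) (Fin (d+1)) K
  Estar : Fin (d+1) → Matrix (Fin (d+1)) (Fin (d+1)) K
  θ : Fin (d+1) → K
  θs : Fin (d+1) → K
  θ_inj : Function.Injective θ
  θs_inj : Function.Injective θs
  E_ne : ∀ i, E i ≠ 0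
  Es_ne : ∀ i, Estar i ≠ 0
  E_mul : ∀ i j, E i * E j = if i = j then E i else 0
  Es_mul : ∀ i j, Estar i * Estar j = if i = j then Estar i else 0
  E_sum : ∑ i, E i = 1
  Es_sum : ∑ i, Estar i = 1
  A_eq : A = ∑ i, θ i • E i
  As_eq : Astar = ∑ i, θs i • Estar i
  trid0 : ∀ i j : Fin (d+1), ((i : ℤ) - (j : ℤ)).natAbs > 1 → E i * Astar * E j = 0
  trid1 : ∀ i j : Fin (d+1), ((i : ℤ) - (j : ℤ)).natAbs = 1 → E i * Astar * E j ≠ 0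
  strid0 : ∀ i j : Fin (d+1), ((i : ℤ) - (j : ℤ)).natAbs > 1 → Estar i * A * Estar j = 0
  strid1 : ∀ i j : Fin (d+1), ((i : ℤ) - (j : ℤ)).natAbs = 1 → Estar i * A * Estar j ≠ 0

namespace LeonardSystem

variable {K : Type*} [Field K] {d : ℕ}

/-- Eigenvalues indexed by `ℕ` (junk value outside range). -/
def θN (L : LeonardSystem K d) (i : ℕ) : K := if h : i < d + 1 then L.θ ⟨i, h⟩ else 0

def θsN (L : LeonardSystem K d) (i : ℕ) : K := if h : i < d + 1 then L.θs ⟨i, h⟩ else 0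

/-- `τ_i(A) = (A-θ₀)(A-θ₁)⋯(A-θ_{i-1})`. -/
def tauA (L : LeonardSystem K d) : ℕ → Matrix (Fin (d+1)) (Fin (d+1)) K
  | 0 => 1
  | i + 1 => L.tauA i * (L.A - L.θN i • 1)

/-- `η_i(A) = (A-θ_d)(A-θ_{d-1})⋯(A-θ_{d-i+1})`. -/
def etaA (L : LeonardSystem K d) : ℕ → Matrix (Fin (d+1)) (Fin (d+1)) K
  | 0 => 1
  | i + 1 => L.etaA i * (L.A - L.θN (d - i) • 1)

/-- `τ*_i(A*)`. -/
def tausA (L : LeonardSystem K d) : ℕ → Matrix (Fin (d+1)) (Fin (d+1)) K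
  | 0 => 1
  | i + 1 => L.tausA i * (L.Astar - L.θsN i • 1)

/-- `η*_i(A*)`. -/
def etasA (L : LeonardSystem K d) : ℕ → Matrix (Fin (d+1)) (Fin (d+1)) K
  | 0 => 1
  | i + 1 => L.etasA i * (L.Astar - L.θsN (d - i) • 1)

/-- Scalar `τ_i(x)`. -/
def tauS (L : LeonardSystem K d) (i : ℕ) (x : K) : K := ∏ j ∈ Finset.range i, (x - L.θN j)

/-- Scalar `η_i(x)`. -/
def etaS (L : LeonardSystem K d) (i : ℕ) (x : K) : K := ∏ j ∈ Finset.range i, (x - L.θN (d - j))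

/-- Scalar `τ*_i(x)`. -/
def tausS (L : LeonardSystem K d) (i : ℕ) (x : K) : K := ∏ j ∈ Finset.range i, (x - L.θsN j)

/-- Scalar `η*_i(x)`. -/
def etasS (L : LeonardSystem K d) (i : ℕ) (x : K) : K := ∏ j ∈ Finset.range i, (x - L.θsN (d - j))

/-- First split sequence `φ_i`. -/
noncomputable def varphi (L : LeonardSystem K d) (i : ℕ) : K :=
  (L.θsN 0 - L.θsN i) * (L.tauA i * L.Estar 0).trace / (L.tauA (i-1) * L.Estar 0).trace

/-- Second split sequence `ϕ_i`. -/
noncomputable def phi (L : LeonardSystem K d) (i : ℕ) : K :=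
  (L.θsN 0 - L.θsN i) * (L.etaA i * L.Estar 0).trace / (L.etaA (i-1) * L.Estar 0).trace

/-- `φ₁φ₂⋯φ_r`. -/
noncomputable def varphiProd (L : LeonardSystem K d) (r : ℕ) : K :=
  ∏ j ∈ Finset.range r, L.varphi (j + 1)

/-- `ϕ₁ϕ₂⋯ϕ_r`. -/
noncomputable def phiProd (L : LeonardSystem K d) (r : ℕ) : K :=
  ∏ j ∈ Finset.range r, L.phi (j + 1)

/-- `φ_d φ_{d-1} ⋯ φ_{d-r+1}`. -/
noncomputable def varphiRevProd (L : LeonardSystem K d) (r : ℕ) : K :=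
  ∏ j ∈ Finset.range r, L.varphi (d - j)

/-- `ϕ_d ϕ_{d-1} ⋯ ϕ_{d-r+1}`. -/
noncomputable def phiRevProd (L : LeonardSystem K d) (r : ℕ) : K :=
  ∏ j ∈ Finset.range r, L.phi (d - j)

end LeonardSystem

section Triangular

variable {K ι M N : Type*} [Field K] [LinearOrder ι] [Fintype ι]
  [AddCommGroup M] [Module K M] [AddCommGroup N] [Module K N]

theorem coeff_eq_zero_of_triangular {v : ι → M} {P : ι → M →ₗ[K] N}
    (hlt : ∀ i k, i < k → P k (v i) = 0) (hdiag : ∀ k, P k (v k) ≠ 0)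
    {S : Set ι} (hS : IsUpperSet S) {g : ι → K} (hg : ∀ k ∈ S, P k (∑ i, g i • v i) = 0) :
    ∀ k ∈ S, g k = 0 := by
  classical
  by_contra! h
  obtain ⟨k₀, hk₀⟩ := h
  obtain ⟨k, hk, hmax⟩ := (Finset.univ.filter fun k => k ∈ S ∧ g k ≠ 0).exists_max_image id
    ⟨k₀, by simpa using hk₀⟩
  simp only [Finset.mem_filter, Finset.mem_univ, true_and, id] at hk hmax
  have hsum : P k (∑ i, g i • v i) = g k • P k (v k) := by
    rw [map_sum, Finset.sum_eq_single k]
    · exact map_smul _ _ _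
    · intro i _ hik
      rcases hik.lt_or_gt with hik | hik
      · rw [map_smul, hlt i k hik, smul_zero]
      · rw [not_not.1 fun hgi => hik.not_ge (hmax i ⟨hS hik.le hk.1, hgi⟩), zero_smul, map_zero]
    · simp
  exact smul_ne_zero hk.2 (hdiag k) (hsum ▸ hg k hk.1)

theorem coeff_eq_zero_of_triangular' {v : ι → M} {P : ι → M →ₗ[K] N}
    (hgt : ∀ i k, k < i → P k (v i) = 0) (hdiag : ∀ k, P k (v k) ≠ 0)
    {S : Set ι} (hS : IsLowerSet S) {g : ι → K} (hg : ∀ k ∈ S, P k (∑ i, g i • v i) = 0) :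
    ∀ k ∈ S, g k = 0 :=
  coeff_eq_zero_of_triangular (ι := ιᵒᵈ) (fun i k h => hgt i k h) hdiag hS.toDual hg

end Triangular

namespace OrthogonalIdempotents

variable {K n : Type*} [Field K] [Fintype n] [DecidableEq n] {P : n → Matrix n n K}

theorem exists_ne_zero_mulVec_eq (hP : OrthogonalIdempotents P) (hne : ∀ i, P i ≠ 0) (k : n) :
    ∃ x, x ≠ 0 ∧ P k *ᵥ x = x := by
  obtain ⟨v, hv⟩ : ∃ v, P k *ᵥ v ≠ 0 := by
    by_contra! h
    exact hne k (ext_iff_mulVec.2 fun v => by simp [h v])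
  exact ⟨P k *ᵥ v, hv, by rw [mulVec_mulVec, (hP.idem k).eq]⟩

-- Nonzero vectors taken from the ranges of the `P i` are independent, hence a basis of `n → K`;
-- so each `P k` has rank one.
theorem exists_mulVec_eq_smul (hP : OrthogonalIdempotents P) (hne : ∀ i, P i ≠ 0) {k : n}
    {x : n → K} (hx : x ≠ 0) (hkx : P k *ᵥ x = x) (y : n → K) : ∃ c : K, P k *ᵥ y = c • x := by
  choose u hu hPu using hP.exists_ne_zero_mulVec_eq hne
  have hproj : ∀ (k' : n) (c : n → K), P k' *ᵥ ∑ i, c i • u i = c k' • u k' := by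
    intro k' c
    rw [mulVec_sum, Finset.sum_eq_single k']
    · rw [mulVec_smul, hPu]
    · intro i _ hi
      rw [mulVec_smul, ← hPu i, mulVec_mulVec, hP.ortho (Ne.symm hi), zero_mulVec, smul_zero]
    · simp
  have hli : LinearIndependent K u := by
    refine Fintype.linearIndependent_iff.2 fun c hc k' => ?_
    have := hproj k' c
    rw [hc, mulVec_zero, eq_comm, smul_eq_zero] at this
    exact this.resolve_right (hu k')
  have hspan := hli.span_eq_top_of_card_eq_finrank' (by simp)
  have hcoord : ∀ z : n → K, ∃ c : n → K, P k *ᵥ z = c k • u k := fun z => by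
    obtain ⟨c, rfl⟩ :=
      (Submodule.mem_span_range_iff_exists_fun K).1 (hspan ▸ Submodule.mem_top (x := z))
    exact ⟨c, hproj k c⟩
  obtain ⟨a, ha⟩ := hcoord x
  obtain ⟨c, hc⟩ := hcoord y
  have ha0 : a k ≠ 0 := by
    rintro h
    rw [hkx, h, zero_smul] at ha
    exact hx ha
  refine ⟨c k / a k, ?_⟩
  rw [hc, ← hkx, ha, smul_smul, div_mul_cancel₀ _ ha0]

theorem exists_eq_vecMulVec (hP : OrthogonalIdempotents P) (hne : ∀ i, P i ≠ 0) {k : n}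
    {x : n → K} (hx : x ≠ 0) (hkx : P k *ᵥ x = x) : ∃ g : n → K, P k = vecMulVec x g := by
  choose c hc using hP.exists_mulVec_eq_smul hne hx hkx
  refine ⟨fun a => c (Pi.single a 1), ext_of_mulVec_single fun a => ?_⟩
  rw [hc, vecMulVec_mulVec]
  simp

theorem mul_eq_mul_of_mulVec_eq (hP : OrthogonalIdempotents P) (hne : ∀ i, P i ≠ 0) {k : n}
    {x : n → K} (hx : x ≠ 0) (hkx : P k *ᵥ x = x) {M N : Matrix n n K}
    (h : M *ᵥ x = N *ᵥ x) : M * P k = N * P k := by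
  obtain ⟨g, hg⟩ := hP.exists_eq_vecMulVec hne hx hkx
  rw [hg, mul_vecMulVec, mul_vecMulVec, h]

theorem mulVec_ne_zero_of_mul_ne_zero (hP : OrthogonalIdempotents P) (hne : ∀ i, P i ≠ 0)
    {k : n} {x : n → K} (hx : x ≠ 0) (hkx : P k *ᵥ x = x) {N : Matrix n n K}
    (h : N * P k ≠ 0) : N *ᵥ x ≠ 0 := by
  intro hN
  apply h
  rw [hP.mul_eq_mul_of_mulVec_eq hne hx hkx (N := 0) (by rw [hN, zero_mulVec]), zero_mul]

theorem trace_eq_one (hP : OrthogonalIdempotents P) (hne : ∀ i, P i ≠ 0) (k : n) :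
    trace (P k) = 1 := by
  obtain ⟨x, hx, hkx⟩ := hP.exists_ne_zero_mulVec_eq hne k
  obtain ⟨g, hg⟩ := hP.exists_eq_vecMulVec hne hx hkx
  have h : (g ⬝ᵥ x) • x = (1 : K) • x := by
    rw [one_smul]
    conv_rhs => rw [← hkx, hg, vecMulVec_mulVec, op_smul_eq_smul]
  rw [hg, trace_vecMulVec, dotProduct_comm, smul_left_injective K hx h]

theorem mul_mul_eq_trace_smul (hP : OrthogonalIdempotents P) (hne : ∀ i, P i ≠ 0) (k : n)
    (M : Matrix n n K) : P k * M * P k = trace (M * P k) • P k := by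
  obtain ⟨x, hx, hkx⟩ := hP.exists_ne_zero_mulVec_eq hne k
  obtain ⟨c, hc⟩ := hP.exists_mulVec_eq_smul hne hx hkx (M *ᵥ x)
  have hPMP : P k * M * P k = c • P k := by
    rw [← smul_one_mul, hP.mul_eq_mul_of_mulVec_eq hne hx hkx]
    rw [← mulVec_mulVec, hc, smul_mulVec, one_mulVec]
  have htr : trace (M * P k) = c := by
    rw [← (hP.idem k).eq, ← mul_assoc, trace_mul_comm, ← mul_assoc, hPMP, trace_smul,
      hP.trace_eq_one hne, smul_eq_mul, mul_one]
  rw [hPMP, htr]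

theorem mulVec_mulVec_eq_trace_smul (hP : OrthogonalIdempotents P) (hne : ∀ i, P i ≠ 0)
    {k : n} {x : n → K} (hkx : P k *ᵥ x = x) (M : Matrix n n K) :
    P k *ᵥ (M *ᵥ x) = trace (M * P k) • x := by
  conv_lhs => rw [← hkx, mulVec_mulVec, mulVec_mulVec, hP.mul_mul_eq_trace_smul hne]
  rw [smul_mulVec, hkx]

end OrthogonalIdempotents

theorem exists_bilin_apply_ne_zero {K n : Type*} [Field K] [Fintype n] [DecidableEq n]
    {B : (n → K) →ₗ[K] (n → K) →ₗ[K] K} (hB : B ≠ 0) {σ : Matrix n n K → Matrix n n K}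
    (hσ : ∀ X u v, B (X *ᵥ u) v = B u (σ X *ᵥ v)) {ξ : n → K} (hξ : ξ ≠ 0) :
    ∃ v, B ξ v ≠ 0 := by
  by_contra! h
  obtain ⟨p, hp⟩ := Function.ne_iff.1 hξ
  refine hB (LinearMap.ext₂ fun u v => ?_)
  have hu : vecMulVec u (Pi.single p (ξ p)⁻¹) *ᵥ ξ = u := by
    rw [vecMulVec_mulVec, op_smul_eq_smul, single_dotProduct, inv_mul_cancel₀ hp, one_smul]
  rw [← hu, hσ, h, LinearMap.zero_apply, LinearMap.zero_apply]

namespace LeonardSystem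

variable {K : Type*} [Field K] {d : ℕ} (L : LeonardSystem K d)

def dual : LeonardSystem K d where
  A := L.Astar
  Astar := L.A
  E := L.Estar
  Estar := L.E
  θ := L.θs
  θs := L.θ
  θ_inj := L.θs_inj
  θs_inj := L.θ_inj
  E_ne := L.Es_ne
  Es_ne := L.E_ne
  E_mul := L.Es_mul
  Es_mul := L.E_mul
  E_sum := L.Es_sum
  Es_sum := L.E_sum
  A_eq := L.As_eq
  As_eq := L.A_eq
  trid0 := L.strid0
  trid1 := L.strid1
  strid0 := L.trid0
  strid1 := L.trid1

@[simp] theorem dual_E : L.dual.E = L.Estar := rfl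
@[simp] theorem dual_Estar : L.dual.Estar = L.E := rfl
@[simp] theorem dual_θ : L.dual.θ = L.θs := rfl
@[simp] theorem dual_tauS : L.dual.tauS = L.tausS := rfl

@[simp] theorem dual_tauA (n : ℕ) : L.dual.tauA n = L.tausA n := by
  induction n with
  | zero => rfl
  | succ n ih => rw [tauA, ih]; rfl

theorem θN_val (j : Fin (d+1)) : L.θN j = L.θ j := dif_pos j.isLt

theorem θsN_val (j : Fin (d+1)) : L.θsN j = L.θs j := L.dual.θN_val j

theorem θN_ne {j : Fin (d+1)} {s : ℕ} (hs : s ≤ d) (hjs : (j : ℕ) ≠ s) : L.θ j ≠ L.θN s := by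
  rw [show s = ((⟨s, by omega⟩ : Fin (d+1)) : ℕ) from rfl, θN_val]
  exact L.θ_inj.ne (Fin.ne_of_val_ne hjs)

theorem orthogonalIdempotents_E : OrthogonalIdempotents L.E :=
  OrthogonalIdempotents.iff_mul_eq.2 L.E_mul

theorem orthogonalIdempotents_Estar : OrthogonalIdempotents L.Estar :=
  L.dual.orthogonalIdempotents_E

theorem sum_E_mulVec (x : Fin (d+1) → K) : ∑ k, L.E k *ᵥ x = x := by
  rw [← sum_mulVec, L.E_sum, one_mulVec]


theorem sum_Estar_mulVec (x : Fin (d+1) → K) : ∑ k, L.Estar k *ᵥ x = x :=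
  L.dual.sum_E_mulVec x

theorem A_mul_E (j : Fin (d+1)) : L.A * L.E j = L.θ j • L.E j := by
  simp [L.A_eq, Finset.sum_mul, L.E_mul]

theorem E_mul_A (j : Fin (d+1)) : L.E j * L.A = L.θ j • L.E j := by
  simp [L.A_eq, Finset.mul_sum, L.E_mul]

theorem Estar_mul_Astar (j : Fin (d+1)) : L.Estar j * L.Astar = L.θs j • L.Estar j :=
  L.dual.E_mul_A j

theorem Estar_mulVec_Astar_sub_mulVec (k : Fin (d+1)) (c : K) (x : Fin (d+1) → K) :
    L.Estar k *ᵥ ((L.Astar - c • 1) *ᵥ x) = (L.θs k - c) • L.Estar k *ᵥ x := by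
  rw [mulVec_mulVec, mul_sub, Estar_mul_Astar, mul_smul_comm, mul_one, ← sub_smul, smul_mulVec]

theorem tauS_succ (n : ℕ) (x : K) : L.tauS (n+1) x = L.tauS n x * (x - L.θN n) :=
  Finset.prod_range_succ _ _

theorem E_mul_tauA (n : ℕ) (j : Fin (d+1)) : L.E j * L.tauA n = L.tauS n (L.θ j) • L.E j := by
  induction n with
  | zero => simp [tauA, tauS]
  | succ n ih =>
    rw [tauA, ← mul_assoc, ih, smul_mul_assoc, mul_sub, E_mul_A, mul_smul_comm, mul_one,
      ← sub_smul, smul_smul, tauS_succ]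

theorem tauA_mul_E (n : ℕ) (j : Fin (d+1)) : L.tauA n * L.E j = L.tauS n (L.θ j) • L.E j := by
  induction n with
  | zero => simp [tauA, tauS]
  | succ n ih =>
    rw [tauA, mul_assoc, sub_mul, A_mul_E, smul_mul_assoc, one_mul, ← sub_smul, mul_smul_comm,
      ih, smul_smul, tauS_succ, mul_comm]

theorem tausA_mul_Estar (n : ℕ) (j : Fin (d+1)) :
    L.tausA n * L.Estar j = L.tausS n (L.θs j) • L.Estar j := by
  simpa using L.dual.tauA_mul_E n j

theorem tauS_eq_zero {n : ℕ} {j : Fin (d+1)} (hjn : (j : ℕ) < n) : L.tauS n (L.θ j) = 0 :=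
  Finset.prod_eq_zero (Finset.mem_range.2 hjn) (by rw [θN_val, sub_self])

theorem tausS_eq_zero {n : ℕ} {j : Fin (d+1)} (hjn : (j : ℕ) < n) : L.tausS n (L.θs j) = 0 :=
  L.dual.tauS_eq_zero hjn

theorem tauS_ne_zero {n : ℕ} {j : Fin (d+1)} (hnj : n ≤ j) : L.tauS n (L.θ j) ≠ 0 :=
  Finset.prod_ne_zero_iff.2 fun s hs =>
    sub_ne_zero.2 (L.θN_ne (by have := Finset.mem_range.1 hs; omega)
      (by have := Finset.mem_range.1 hs; omega))

theorem commute_A_tauA (n : ℕ) : Commute L.A (L.tauA n) := by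
  induction n with
  | zero => exact Commute.one_right _
  | succ n ih =>
    exact ih.mul_right ((Commute.refl _).sub_right ((Commute.one_right _).smul_right _))

theorem tauA_succ_mulVec (n : ℕ) (x : Fin (d+1) → K) :
    L.tauA (n+1) *ᵥ x = L.A *ᵥ (L.tauA n *ᵥ x) - L.θN n • L.tauA n *ᵥ x := by
  rw [tauA, ← ((L.commute_A_tauA n).sub_left ((Commute.one_left _).smul_left _)).eq,
    ← mulVec_mulVec, sub_mulVec, smul_mulVec, one_mulVec]

theorem E_mulVec_tauA_mulVec_eq_zero {n : ℕ} {j : Fin (d+1)} (hjn : (j : ℕ) < n)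
    (x : Fin (d+1) → K) : L.E j *ᵥ (L.tauA n *ᵥ x) = 0 := by
  rw [mulVec_mulVec, E_mul_tauA, tauS_eq_zero _ hjn, zero_smul, zero_mulVec]

theorem varphiProd_succ (r : ℕ) : L.varphiProd (r+1) = L.varphiProd r * L.varphi (r+1) :=
  Finset.prod_range_succ _ _


theorem E_mulVec_Astar_mulVec_eq_zero {h : Fin (d+1)} {x : Fin (d+1) → K}
    (hx : ∀ k : Fin (d+1), ((h : ℤ) - k).natAbs ≤ 1 → L.E k *ᵥ x = 0) :
    L.E h *ᵥ (L.Astar *ᵥ x) = 0 := by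
  rw [← L.sum_E_mulVec x, mulVec_sum, mulVec_sum]
  refine Finset.sum_eq_zero fun k _ => ?_
  by_cases hk : ((h : ℤ) - k).natAbs ≤ 1
  · rw [hx k hk, mulVec_zero, mulVec_zero]
  · rw [mulVec_mulVec, mulVec_mulVec, L.trid0 h k (by omega), zero_mulVec]

theorem E_mulVec_Astar_mulVec_ne_zero {h k : Fin (d+1)} (hhk : ((h : ℤ) - k).natAbs = 1)
    {x : Fin (d+1) → K} (hx : ∀ l, l ≠ k → ((h : ℤ) - l).natAbs ≤ 1 → L.E l *ᵥ x = 0)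
    (hkx : L.E k *ᵥ x ≠ 0) : L.E h *ᵥ (L.Astar *ᵥ x) ≠ 0 := by
  have hE := L.orthogonalIdempotents_E
  have hrest : L.E h *ᵥ (L.Astar *ᵥ (x - L.E k *ᵥ x)) = 0 := by
    refine L.E_mulVec_Astar_mulVec_eq_zero fun l hl => ?_
    rw [mulVec_sub, mulVec_mulVec, hE.mul_eq]
    split_ifs with hlk
    · rw [hlk, sub_self]
    · rw [hx l hlk hl, zero_mulVec, sub_zero]
  rw [mulVec_sub, mulVec_sub, sub_eq_zero, mulVec_mulVec, mulVec_mulVec] at hrest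
  rw [mulVec_mulVec, hrest]
  exact hE.mulVec_ne_zero_of_mul_ne_zero L.E_ne hkx (by rw [mulVec_mulVec, (hE.idem k).eq])
    (L.trid1 h k hhk)

theorem Estar_mulVec_A_mulVec_eq_zero {h : Fin (d+1)} {x : Fin (d+1) → K}
    (hx : ∀ k : Fin (d+1), ((h : ℤ) - k).natAbs ≤ 1 → L.Estar k *ᵥ x = 0) :
    L.Estar h *ᵥ (L.A *ᵥ x) = 0 :=
  L.dual.E_mulVec_Astar_mulVec_eq_zero hx

theorem Estar_mulVec_A_mulVec_ne_zero {h k : Fin (d+1)} (hhk : ((h : ℤ) - k).natAbs = 1)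
    {x : Fin (d+1) → K} (hx : ∀ l, l ≠ k → ((h : ℤ) - l).natAbs ≤ 1 → L.Estar l *ᵥ x = 0)
    (hkx : L.Estar k *ᵥ x ≠ 0) : L.Estar h *ᵥ (L.A *ᵥ x) ≠ 0 :=
  L.dual.E_mulVec_Astar_mulVec_ne_zero hhk hx hkx

theorem E_mulVec_tausA_mulVec_eq_zero {k m : ℕ} {x : Fin (d+1) → K}
    (hx : ∀ h : Fin (d+1), (h : ℕ) < k + m → L.E h *ᵥ x = 0) {h : Fin (d+1)} (hh : (h : ℕ) < k) :
    L.E h *ᵥ (L.tausA m *ᵥ x) = 0 := by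
  induction m generalizing x with
  | zero => rw [tausA, one_mulVec]; exact hx h (by omega)
  | succ m ih =>
    rw [tausA, ← mulVec_mulVec]
    refine ih fun h' hh' => ?_
    rw [sub_mulVec, mulVec_sub, smul_mulVec, one_mulVec, mulVec_smul, hx h' (by omega), smul_zero,
      sub_zero]
    exact L.E_mulVec_Astar_mulVec_eq_zero fun l hl => hx l (by omega)

section TauBasis

variable {L} {w : Fin (d+1) → K}

theorem Estar_mulVec_tauA_mulVec_eq_zero (hfix : L.Estar 0 *ᵥ w = w) {i : ℕ} {k : Fin (d+1)}
    (hik : i < k) : L.Estar k *ᵥ (L.tauA i *ᵥ w) = 0 := by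
  induction i generalizing k with
  | zero =>
    rw [tauA, one_mulVec, ← hfix, mulVec_mulVec, L.Es_mul, if_neg (Fin.ne_of_val_ne hik.ne'),
      zero_mulVec]
  | succ i ih =>
    rw [tauA_succ_mulVec, mulVec_sub, mulVec_smul, ih (by omega), smul_zero, sub_zero]
    exact L.Estar_mulVec_A_mulVec_eq_zero fun l hl => ih (by omega)

theorem Estar_mulVec_tauA_mulVec_ne_zero (hw : w ≠ 0) (hfix : L.Estar 0 *ᵥ w = w)
    (k : Fin (d+1)) : L.Estar k *ᵥ (L.tauA k *ᵥ w) ≠ 0 := by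
  induction k using Fin.induction with
  | zero => rwa [Fin.val_zero, tauA, one_mulVec, hfix]
  | succ i ih =>
    rw [Fin.val_succ, tauA_succ_mulVec, mulVec_sub, mulVec_smul,
      Estar_mulVec_tauA_mulVec_eq_zero hfix (by simp), smul_zero, sub_zero]
    refine L.Estar_mulVec_A_mulVec_ne_zero (k := i.castSucc) (by simp) (fun l hl hl' => ?_) ih
    refine Estar_mulVec_tauA_mulVec_eq_zero hfix ?_
    have := Fin.val_ne_of_ne hl
    simp only [Fin.val_castSucc, Fin.val_succ] at this hl' ⊢
    omega

theorem linearIndependent_tauA_mulVec (hw : w ≠ 0) (hfix : L.Estar 0 *ᵥ w = w) :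
    LinearIndependent K fun i : Fin (d+1) => L.tauA i *ᵥ w :=
  Fintype.linearIndependent_iff.2 fun g hg =>
    fun k => coeff_eq_zero_of_triangular (P := fun k => (L.Estar k).mulVecLin)
      (fun _ _ hik => Estar_mulVec_tauA_mulVec_eq_zero hfix hik)
      (Estar_mulVec_tauA_mulVec_ne_zero hw hfix) isUpperSet_univ
      (fun k _ => by simp [hg]) k (Set.mem_univ k)

variable (L) in
noncomputable def tauBasis (hw : w ≠ 0) (hfix : L.Estar 0 *ᵥ w = w) :
    Module.Basis (Fin (d+1)) K (Fin (d+1) → K) :=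
  basisOfLinearIndependentOfCardEqFinrank (linearIndependent_tauA_mulVec hw hfix) (by simp)

@[simp] theorem coe_tauBasis (hw : w ≠ 0) (hfix : L.Estar 0 *ᵥ w = w) :
    ⇑(L.tauBasis hw hfix) = fun i : Fin (d+1) => L.tauA i *ᵥ w :=
  coe_basisOfLinearIndependentOfCardEqFinrank _ _

theorem sum_tauBasis_repr (hw : w ≠ 0) (hfix : L.Estar 0 *ᵥ w = w) (x : Fin (d+1) → K) :
    ∑ i, (L.tauBasis hw hfix).repr x i • L.tauA i *ᵥ w = x := by
  simpa using (L.tauBasis hw hfix).sum_repr x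

theorem tauBasis_repr_eq_zero_of_Estar (hw : w ≠ 0) (hfix : L.Estar 0 *ᵥ w = w)
    {S : Set (Fin (d+1))} (hS : IsUpperSet S) {x : Fin (d+1) → K}
    (hx : ∀ k ∈ S, L.Estar k *ᵥ x = 0) : ∀ k ∈ S, (L.tauBasis hw hfix).repr x k = 0 :=
  coeff_eq_zero_of_triangular (P := fun k => (L.Estar k).mulVecLin)
    (fun _ _ hik => Estar_mulVec_tauA_mulVec_eq_zero hfix hik)
    (Estar_mulVec_tauA_mulVec_ne_zero hw hfix) hS
    (fun k hk => by simpa [sum_tauBasis_repr] using hx k hk)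

theorem E_mulVec_ne_zero (hw : w ≠ 0) (hfix : L.Estar 0 *ᵥ w = w) (h : Fin (d+1)) :
    L.E h *ᵥ w ≠ 0 := by
  intro hhw
  refine L.E_ne h (ext_iff_mulVec.2 fun x => ?_)
  rw [← sum_tauBasis_repr hw hfix x, mulVec_sum, zero_mulVec]
  refine Finset.sum_eq_zero fun i _ => ?_
  rw [mulVec_smul, mulVec_mulVec, E_mul_tauA, smul_mulVec, hhw, smul_zero, smul_zero]

theorem tauBasis_repr_eq_zero_of_E (hw : w ≠ 0) (hfix : L.Estar 0 *ᵥ w = w)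
    {S : Set (Fin (d+1))} (hS : IsLowerSet S) {x : Fin (d+1) → K}
    (hx : ∀ k ∈ S, L.E k *ᵥ x = 0) : ∀ k ∈ S, (L.tauBasis hw hfix).repr x k = 0 :=
  coeff_eq_zero_of_triangular' (P := fun k => (L.E k).mulVecLin)
    (fun _ _ hki => L.E_mulVec_tauA_mulVec_eq_zero hki w)
    (fun k => by
      simpa [mulVec_mulVec, E_mul_tauA, smul_mulVec] using
        ⟨L.tauS_ne_zero le_rfl, E_mulVec_ne_zero hw hfix k⟩) hS
    (fun k hk => by simpa [sum_tauBasis_repr] using hx k hk)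

-- `(A* - θ*_j) u_j` lies in `E*_0 V + ⋯ + E*_{j-1} V` and in `E_{j-1} V + ⋯ + E_d V`: in the basis
-- `u_i` the first kills the coordinates `≥ j`, the second those `< j - 1`.
theorem exists_Astar_sub_mulVec_tauA_mulVec_eq_smul (hw : w ≠ 0) (hfix : L.Estar 0 *ᵥ w = w)
    {j : ℕ} (hj : 1 ≤ j) (hjd : j ≤ d) :
    ∃ c : K, (L.Astar - L.θsN j • 1) *ᵥ (L.tauA j *ᵥ w) = c • L.tauA (j-1) *ᵥ w := by
  generalize hx : (L.Astar - L.θsN j • 1) *ᵥ (L.tauA j *ᵥ w) = x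
  have hEstar : ∀ k ∈ {k : Fin (d+1) | j ≤ k}, L.Estar k *ᵥ x = 0 := by
    intro k (hk : j ≤ k)
    rw [← hx, Estar_mulVec_Astar_sub_mulVec]
    rcases hk.eq_or_lt with rfl | hk
    · rw [θsN_val, sub_self, zero_smul]
    · rw [Estar_mulVec_tauA_mulVec_eq_zero hfix hk, smul_zero]
  have hE : ∀ h ∈ {h : Fin (d+1) | h + 1 < j}, L.E h *ᵥ x = 0 := by
    intro h (hh : h + 1 < j)
    rw [← hx, sub_mulVec, mulVec_sub, smul_mulVec, one_mulVec, mulVec_smul,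
      L.E_mulVec_tauA_mulVec_eq_zero (by omega), smul_zero, sub_zero]
    exact L.E_mulVec_Astar_mulVec_eq_zero fun l hl => L.E_mulVec_tauA_mulVec_eq_zero (by omega) w
  have hrepr : ∀ k : Fin (d+1), (k : ℕ) ≠ j - 1 → (L.tauBasis hw hfix).repr x k = 0 := by
    intro k hk
    rcases lt_or_gt_of_ne hk with hk | hk
    · exact tauBasis_repr_eq_zero_of_E hw hfix
        (fun a b hba (ha : (a : ℕ) + 1 < j) => show (b : ℕ) + 1 < j by rw [Fin.le_def] at hba; omega)
        hE k (show (k : ℕ) + 1 < j by omega)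
    · exact tauBasis_repr_eq_zero_of_Estar hw hfix
        (fun a b hab (ha : j ≤ (a : ℕ)) => show j ≤ (b : ℕ) by rw [Fin.le_def] at hab; omega)
        hEstar k (show j ≤ (k : ℕ) by omega)
  refine ⟨(L.tauBasis hw hfix).repr x ⟨j - 1, by omega⟩, ?_⟩
  conv_lhs => rw [← sum_tauBasis_repr hw hfix x]
  rw [Finset.sum_eq_single ⟨j - 1, by omega⟩ fun k _ hk => by
    rw [hrepr k (fun h => hk (Fin.ext h)), zero_smul]]
  simp

theorem ne_zero_of_Astar_sub_mulVec_tauA_mulVec_eq_smul (hw : w ≠ 0)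
    (hfix : L.Estar 0 *ᵥ w = w) {j : ℕ} (hj : 1 ≤ j) (hjd : j ≤ d) {c : K}
    (hc : (L.Astar - L.θsN j • 1) *ᵥ (L.tauA j *ᵥ w) = c • L.tauA (j-1) *ᵥ w) : c ≠ 0 := by
  rintro rfl
  have hj0 : L.E ⟨j - 1, by omega⟩ *ᵥ (L.tauA j *ᵥ w) = 0 :=
    L.E_mulVec_tauA_mulVec_eq_zero (show j - 1 < j by omega) w
  have hlow := congrArg (L.E ⟨j - 1, by omega⟩ *ᵥ ·) hc
  simp only [zero_smul, mulVec_zero, sub_mulVec, mulVec_sub, smul_mulVec, one_mulVec,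
    mulVec_smul, hj0, smul_zero, sub_zero] at hlow
  refine L.E_mulVec_Astar_mulVec_ne_zero (k := ⟨j, by omega⟩) (by dsimp only; omega)
    (fun l hl hl' => L.E_mulVec_tauA_mulVec_eq_zero ?_ w) ?_ hlow
  · have := Fin.val_ne_of_ne hl
    dsimp only at this hl'
    omega
  · rw [mulVec_mulVec, E_mul_tauA, smul_mulVec]
    exact smul_ne_zero (L.tauS_ne_zero le_rfl) (E_mulVec_ne_zero hw hfix _)

theorem sub_mul_trace_tauA_mul_Estar (hw : w ≠ 0) (hfix : L.Estar 0 *ᵥ w = w) {j : ℕ} {c : K}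
    (hc : (L.Astar - L.θsN j • 1) *ᵥ (L.tauA j *ᵥ w) = c • L.tauA (j-1) *ᵥ w) :
    (L.θsN 0 - L.θsN j) * trace (L.tauA j * L.Estar 0) =
      c * trace (L.tauA (j-1) * L.Estar 0) := by
  have hE := L.orthogonalIdempotents_Estar
  have h0 := congrArg (L.Estar 0 *ᵥ ·) hc
  simp only [Estar_mulVec_Astar_sub_mulVec, mulVec_smul,
    hE.mulVec_mulVec_eq_trace_smul L.Es_ne hfix, smul_smul] at h0
  rw [← smul_left_injective K hw h0, ← L.θsN_val 0]
  rfl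

end TauBasis

theorem trace_tauA_mul_Estar_ne_zero {j : ℕ} (hj : j ≤ d) :
    trace (L.tauA j * L.Estar 0) ≠ 0 := by
  have hE := L.orthogonalIdempotents_Estar
  obtain ⟨w, hw, hfix⟩ := hE.exists_ne_zero_mulVec_eq L.Es_ne 0
  induction j with
  | zero => simp [tauA, hE.trace_eq_one L.Es_ne]
  | succ j ih =>
    obtain ⟨c, hc⟩ := exists_Astar_sub_mulVec_tauA_mulVec_eq_smul hw hfix (by omega) hj
    have h := sub_mul_trace_tauA_mul_Estar hw hfix hc
    rw [Nat.add_sub_cancel] at h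
    exact right_ne_zero_of_mul (h ▸ mul_ne_zero
      (ne_zero_of_Astar_sub_mulVec_tauA_mulVec_eq_smul hw hfix (by omega) hj hc) (ih (by omega)))

section TauBasis

variable {L} {w : Fin (d+1) → K}

theorem varphi_eq_of_Astar_sub_mulVec_tauA_mulVec_eq_smul (hw : w ≠ 0)
    (hfix : L.Estar 0 *ᵥ w = w) {j : ℕ} (hjd : j ≤ d) {c : K}
    (hc : (L.Astar - L.θsN j • 1) *ᵥ (L.tauA j *ᵥ w) = c • L.tauA (j-1) *ᵥ w) :
    L.varphi j = c := by
  rw [varphi, sub_mul_trace_tauA_mul_Estar hw hfix hc,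
    mul_div_cancel_right₀ _ (L.trace_tauA_mul_Estar_ne_zero (by omega))]

theorem Astar_sub_mulVec_tauA_mulVec (hw : w ≠ 0) (hfix : L.Estar 0 *ᵥ w = w) {j : ℕ}
    (hj : 1 ≤ j) (hjd : j ≤ d) :
    (L.Astar - L.θsN j • 1) *ᵥ (L.tauA j *ᵥ w) = L.varphi j • L.tauA (j-1) *ᵥ w := by
  obtain ⟨c, hc⟩ := exists_Astar_sub_mulVec_tauA_mulVec_eq_smul hw hfix hj hjd
  rwa [varphi_eq_of_Astar_sub_mulVec_tauA_mulVec_eq_smul hw hfix hjd hc]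

end TauBasis

theorem varphi_ne_zero {j : ℕ} (hj : 1 ≤ j) (hjd : j ≤ d) : L.varphi j ≠ 0 := by
  obtain ⟨w, hw, hfix⟩ := L.orthogonalIdempotents_Estar.exists_ne_zero_mulVec_eq L.Es_ne 0
  exact ne_zero_of_Astar_sub_mulVec_tauA_mulVec_eq_smul hw hfix hj hjd
    (Astar_sub_mulVec_tauA_mulVec hw hfix hj hjd)

theorem varphiProd_ne_zero {r : ℕ} (hr : r ≤ d) : L.varphiProd r ≠ 0 :=
  Finset.prod_ne_zero_iff.2 fun j hj =>
    L.varphi_ne_zero le_add_self (by have := Finset.mem_range.1 hj; omega)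

section TauBasis

variable {L} {w : Fin (d+1) → K}

theorem tausA_mulVec_tauA_mulVec_eq_zero (hfix : L.Estar 0 *ᵥ w = w) {r i : ℕ} (hir : i < r) :
    L.tausA r *ᵥ (L.tauA i *ᵥ w) = 0 := by
  rw [← L.sum_Estar_mulVec (L.tauA i *ᵥ w), mulVec_sum]
  refine Finset.sum_eq_zero fun k _ => ?_
  by_cases hkr : (k : ℕ) < r
  · rw [mulVec_mulVec, tausA_mul_Estar, L.tausS_eq_zero hkr, zero_smul, zero_mulVec]
  · rw [Estar_mulVec_tauA_mulVec_eq_zero hfix (by omega), mulVec_zero]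

theorem E_zero_mulVec_tausA_mulVec_tauA_mulVec_self (hw : w ≠ 0) (hfix : L.Estar 0 *ᵥ w = w)
    {r : ℕ} (hr : r ≤ d) :
    L.E 0 *ᵥ (L.tausA r *ᵥ (L.tauA r *ᵥ w)) = L.varphiProd r • L.E 0 *ᵥ w := by
  induction r with
  | zero => simp [tausA, tauA, varphiProd]
  | succ r ih =>
    have hshift : L.Astar - L.θsN r • 1 =
        (L.Astar - L.θsN (r+1) • 1) + (L.θsN (r+1) - L.θsN r) • (1 : Matrix _ _ K) := by
      rw [sub_smul]; abel
    have hhigh : L.E 0 *ᵥ (L.tausA r *ᵥ (L.tauA (r+1) *ᵥ w)) = 0 :=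
      L.E_mulVec_tausA_mulVec_eq_zero (k := 1)
        (fun h hh => L.E_mulVec_tauA_mulVec_eq_zero (by omega) w) (by simp)
    rw [tausA, ← mulVec_mulVec, hshift, add_mulVec,
      Astar_sub_mulVec_tauA_mulVec hw hfix le_add_self hr, Nat.add_sub_cancel, smul_mulVec,
      one_mulVec, mulVec_add, mulVec_add, mulVec_smul, mulVec_smul, mulVec_smul, mulVec_smul,
      ih (by omega), hhigh, smul_zero, add_zero, smul_smul, varphiProd_succ, mul_comm]

theorem E_zero_mulVec_tausA_mulVec_tauA_mulVec (hw : w ≠ 0) (hfix : L.Estar 0 *ᵥ w = w)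
    (r i : Fin (d+1)) :
    L.E 0 *ᵥ (L.tausA r *ᵥ (L.tauA i *ᵥ w)) =
      (if r = i then L.varphiProd r else 0) • L.E 0 *ᵥ w := by
  rcases lt_trichotomy r i with hri | rfl | hri
  · rw [if_neg hri.ne, zero_smul]
    have := Fin.lt_def.1 hri
    exact L.E_mulVec_tausA_mulVec_eq_zero (k := 1)
      (fun h hh => L.E_mulVec_tauA_mulVec_eq_zero (by omega) w) (by simp)
  · rw [if_pos rfl]
    exact E_zero_mulVec_tausA_mulVec_tauA_mulVec_self hw hfix (by omega)
  · rw [if_neg hri.ne', zero_smul, tausA_mulVec_tauA_mulVec_eq_zero hfix hri, mulVec_zero]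

theorem sum_mulVec_tauA_mulVec (hw : w ≠ 0) (hfix : L.Estar 0 *ᵥ w = w)
    (X : Fin (d+1) → Matrix (Fin (d+1)) (Fin (d+1)) K) (i : Fin (d+1)) :
    (∑ r : Fin (d+1), (L.varphiProd r)⁻¹ • (X r * L.E 0 * L.tausA r)) *ᵥ (L.tauA i *ᵥ w) =
      X i *ᵥ (L.E 0 *ᵥ w) := by
  have hterm : ∀ r : Fin (d+1),
      ((L.varphiProd r)⁻¹ • (X r * L.E 0 * L.tausA r)) *ᵥ (L.tauA i *ᵥ w) =
        if r = i then X i *ᵥ (L.E 0 *ᵥ w) else 0 := by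
    intro r
    rw [smul_mulVec, ← mulVec_mulVec, ← mulVec_mulVec,
      E_zero_mulVec_tausA_mulVec_tauA_mulVec hw hfix, mulVec_smul, smul_smul]
    split_ifs with hri
    · rw [hri, inv_mul_cancel₀ (L.varphiProd_ne_zero (by omega)), one_smul]
    · rw [mul_zero, zero_smul]
  rw [sum_mulVec, Finset.sum_congr rfl fun r _ => hterm r, Finset.sum_ite_eq',
    if_pos (Finset.mem_univ i)]

end TauBasis

theorem Estar_zero_mul_E_zero_mul_tausA_mul_tauA_mul_Estar_zero (r i : Fin (d+1)) :
    L.Estar 0 * L.E 0 * L.tausA r * L.tauA i * L.Estar 0 =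
      ((if r = i then L.varphiProd r else 0) * trace (L.E 0 * L.Estar 0)) • L.Estar 0 := by
  have hE := L.orthogonalIdempotents_Estar
  obtain ⟨w, hw, hfix⟩ := hE.exists_ne_zero_mulVec_eq L.Es_ne 0
  have hM : L.E 0 * L.tausA r * L.tauA i * L.Estar 0 =
      (if r = i then L.varphiProd r else 0) • (L.E 0 * L.Estar 0) := by
    rw [← smul_mul_assoc]
    refine hE.mul_eq_mul_of_mulVec_eq L.Es_ne hw hfix ?_
    rw [← mulVec_mulVec, ← mulVec_mulVec, E_zero_mulVec_tausA_mulVec_tauA_mulVec hw hfix,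
      smul_mulVec]
  rw [show L.Estar 0 * L.E 0 * L.tausA r * L.tauA i * L.Estar 0 =
      L.Estar 0 * (L.E 0 * L.tausA r * L.tauA i) * L.Estar 0 by simp only [mul_assoc],
    hE.mul_mul_eq_trace_smul L.Es_ne, hM, trace_smul, smul_eq_mul]

theorem trace_E_zero_mul_Estar_zero_ne_zero : trace (L.E 0 * L.Estar 0) ≠ 0 := by
  have hE := L.orthogonalIdempotents_Estar
  obtain ⟨w, hw, hfix⟩ := hE.exists_ne_zero_mulVec_eq L.Es_ne 0
  have h := E_mulVec_ne_zero (L := L.dual) (E_mulVec_ne_zero hw hfix 0)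
    (by rw [dual_Estar, mulVec_mulVec, (L.orthogonalIdempotents_E.idem 0).eq]) 0
  rw [dual_E, hE.mulVec_mulVec_eq_trace_smul L.Es_ne hfix] at h
  exact left_ne_zero_of_smul h

section Bilinear

variable {B : (Fin (d+1) → K) →ₗ[K] (Fin (d+1) → K) →ₗ[K] K}

theorem bilin_E_mulVec_E_mulVec_eq_zero (hBA : ∀ u v, B (L.A *ᵥ u) v = B u (L.A *ᵥ v))
    {i j : Fin (d+1)} (hij : i ≠ j) (u v : Fin (d+1) → K) :
    B (L.E i *ᵥ u) (L.E j *ᵥ v) = 0 := by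
  have h := hBA (L.E i *ᵥ u) (L.E j *ᵥ v)
  rw [mulVec_mulVec, mulVec_mulVec, A_mul_E, A_mul_E, smul_mulVec, smul_mulVec, map_smul,
    map_smul, LinearMap.smul_apply, smul_eq_mul, smul_eq_mul, ← sub_eq_zero, ← sub_mul] at h
  exact (mul_eq_zero.1 h).resolve_left (sub_ne_zero.2 (L.θ_inj.ne hij))

theorem bilin_E_mulVec_eq (hBA : ∀ u v, B (L.A *ᵥ u) v = B u (L.A *ᵥ v))
    (j : Fin (d+1)) (u v : Fin (d+1) → K) : B (L.E j *ᵥ u) v = B u (L.E j *ᵥ v) := by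
  calc B (L.E j *ᵥ u) v = ∑ k, B (L.E j *ᵥ u) (L.E k *ᵥ v) := by rw [← map_sum, sum_E_mulVec]
    _ = ∑ k, B (L.E k *ᵥ u) (L.E j *ᵥ v) := by
      rw [Finset.sum_eq_single j, Finset.sum_eq_single j] <;>
        simp +contextual [L.bilin_E_mulVec_E_mulVec_eq_zero hBA, Ne.symm]
    _ = B u (L.E j *ᵥ v) := by rw [← LinearMap.sum_apply, ← map_sum, sum_E_mulVec]

theorem bilin_self_ne_zero (hB : B ≠ 0)
    {σ : Matrix (Fin (d+1)) (Fin (d+1)) K → Matrix (Fin (d+1)) (Fin (d+1)) K}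
    (hσ : ∀ X u v, B (X *ᵥ u) v = B u (σ X *ᵥ v))
    (hBA : ∀ u v, B (L.A *ᵥ u) v = B u (L.A *ᵥ v)) {ξ : Fin (d+1) → K} (hξ : ξ ≠ 0)
    (hE0 : L.E 0 *ᵥ ξ = ξ) : B ξ ξ ≠ 0 := by
  obtain ⟨v, hv⟩ := exists_bilin_apply_ne_zero hB hσ hξ
  obtain ⟨c, hc⟩ := L.orthogonalIdempotents_E.exists_mulVec_eq_smul L.E_ne hξ hE0 v
  have h : B ξ v = c * B ξ ξ := by
    conv_lhs => rw [← hE0]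
    rw [L.bilin_E_mulVec_eq hBA, hc, map_smul, smul_eq_mul]
  exact right_ne_zero_of_mul (h ▸ hv)

end Bilinear

end LeonardSystem

theorem LeonardSystem.transition_from_tauixs0_general {K : Type*} [Field K] {d : ℕ}
    (L : LeonardSystem K d)
    (σ : (Matrix (Fin (d+1)) (Fin (d+1)) K) →ₗ[K] Matrix (Fin (d+1)) (Fin (d+1)) K)
    (hA : σ L.A = L.A)
    (B : (Fin (d+1) → K) →ₗ[K] (Fin (d+1) → K) →ₗ[K] K) (hB : B ≠ 0)
    (hcomp : ∀ (X : Matrix (Fin (d+1)) (Fin (d+1)) K) (u v : Fin (d+1) → K),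
      B (X.mulVec u) v = B u ((σ X).mulVec v))
    (ξ0 ξs0 : Fin (d+1) → K) (hξ0 : ξ0 ≠ 0) (hξs0 : ξs0 ≠ 0)
    (hE0 : (L.E 0).mulVec ξ0 = ξ0) (hEs0 : (L.Estar 0).mulVec ξs0 = ξs0) :
    (∀ r i : Fin (d+1),
      (((L.E 0 * L.Estar 0).trace)⁻¹ * (L.varphiProd (r : ℕ))⁻¹) •
        (L.Estar 0 * L.E 0 * L.tausA (r : ℕ) * L.tauA (i : ℕ) * L.Estar 0) =
      if r = i then L.Estar 0 else 0) ∧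
    (∀ X : Fin (d+1) → Matrix (Fin (d+1)) (Fin (d+1)) K,
      (X = L.Estar ∨ X = (fun i => L.Estar i.rev) ∨ X = (fun (i : Fin (d+1)) => L.tausA (i : ℕ)) ∨
       X = (fun (i : Fin (d+1)) => L.tausA (d - (i : ℕ))) ∨ X = (fun (i : Fin (d+1)) => L.etasA (i : ℕ)) ∨
       X = (fun (i : Fin (d+1)) => L.etasA (d - (i : ℕ)))) →
      ∀ i : Fin (d+1),
        (B ξ0 ξ0 / B ξ0 ξs0) •
          (∑ r : Fin (d+1), (L.varphiProd (r : ℕ))⁻¹ • (X r * L.E 0 * L.tausA (r : ℕ))).mulVec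
            ((L.tauA (i : ℕ)).mulVec ξs0) = (X i).mulVec ξ0) := by
  refine ⟨fun r i => ?_, fun X _ i => ?_⟩
  · have htr := L.trace_E_zero_mul_Estar_zero_ne_zero
    have hφ := L.varphiProd_ne_zero (Nat.lt_succ_iff.1 r.isLt)
    rw [L.Estar_zero_mul_E_zero_mul_tausA_mul_tauA_mul_Estar_zero, smul_smul]
    split_ifs
    · rw [show _ * (_ * _) = (1 : K) by field_simp, one_smul]
    · rw [zero_mul, mul_zero, zero_smul]
  · have hBA : ∀ u v, B (L.A *ᵥ u) v = B u (L.A *ᵥ v) := fun u v => by rw [hcomp, hA]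
    obtain ⟨μ, hμ⟩ := L.orthogonalIdempotents_E.exists_mulVec_eq_smul L.E_ne hξ0 hE0 ξs0
    have hμ0 : μ ≠ 0 := by
      rintro rfl
      exact E_mulVec_ne_zero hξs0 hEs0 0 (by rw [hμ, zero_smul])
    have hB0 := L.bilin_self_ne_zero hB hcomp hBA hξ0 hE0
    have hBs : B ξ0 ξs0 = μ * B ξ0 ξ0 := by
      conv_lhs => rw [← hE0]
      rw [L.bilin_E_mulVec_eq hBA, hμ, map_smul, smul_eq_mul]
    rw [sum_mulVec_tauA_mulVec hξs0 hEs0, hμ, mulVec_smul, smul_smul, hBs,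
      show B ξ0 ξ0 / (μ * B ξ0 ξ0) * μ = 1 by field_simp, one_smul]

/-- `(1/tr(E_0E*_0)) (E*_0 E_0 τ*_r(A*)/(φ_1⋯φ_r)) τ_i(A) E*_0 = δ_{ri} E*_0`,
and the transition map from the basis `{τ_i(A)ξ*_0}` sending it to `{X_i ξ_0}`
for each of the six dual families of `X`'s. -/
theorem LeonardSystem.transition_from_tauixs0 {K : Type*} [Field K] {d : ℕ}
    (L : LeonardSystem K d)
    (σ : (Matrix (Fin (d+1)) (Fin (d+1)) K) →ₗ[K] Matrix (Fin (d+1)) (Fin (d+1)) K)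
    (hanti : ∀ X Y, σ (X * Y) = σ Y * σ X) (hbij : Function.Bijective σ)
    (hA : σ L.A = L.A) (hAs : σ L.Astar = L.Astar)
    (B : (Fin (d+1) → K) →ₗ[K] (Fin (d+1) → K) →ₗ[K] K) (hB : B ≠ 0)
    (hcomp : ∀ (X : Matrix (Fin (d+1)) (Fin (d+1)) K) (u v : Fin (d+1) → K),
      B (X.mulVec u) v = B u ((σ X).mulVec v))
    (ξ0 ξs0 : Fin (d+1) → K) (hξ0 : ξ0 ≠ 0) (hξs0 : ξs0 ≠ 0)
    (hE0 : (L.E 0).mulVec ξ0 = ξ0) (hEs0 : (L.Estar 0).mulVec ξs0 = ξs0) :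
    (∀ r i : Fin (d+1),
      (((L.E 0 * L.Estar 0).trace)⁻¹ * (L.varphiProd (r : ℕ))⁻¹) •
        (L.Estar 0 * L.E 0 * L.tausA (r : ℕ) * L.tauA (i : ℕ) * L.Estar 0) =
      if r = i then L.Estar 0 else 0) ∧
    (∀ X : Fin (d+1) → Matrix (Fin (d+1)) (Fin (d+1)) K,
      (X = L.Estar ∨ X = (fun i => L.Estar i.rev) ∨ X = (fun (i : Fin (d+1)) => L.tausA (i : ℕ)) ∨
       X = (fun (i : Fin (d+1)) => L.tausA (d - (i : ℕ))) ∨ X = (fun (i : Fin (d+1)) => L.etasA (i : ℕ)) ∨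
       X = (fun (i : Fin (d+1)) => L.etasA (d - (i : ℕ)))) →
      ∀ i : Fin (d+1),
        (B ξ0 ξ0 / B ξ0 ξs0) •
          (∑ r : Fin (d+1), (L.varphiProd (r : ℕ))⁻¹ • (X r * L.E 0 * L.tausA (r : ℕ))).mulVec
            ((L.tauA (i : ℕ)).mulVec ξs0) = (X i).mulVec ξ0) :=
  LeonardSystem.transition_from_tauixs0_general L σ hA B hB hcomp ξ0 ξs0 hξ0 hξs0 hE0 hEs0
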